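/- Let 0 < β < 1 and a = 2^{−β} with a ≠ 1/2. If x ∈ [0,1) is not a dyadic rational, then the forward fractional velocity of De Rham's function R_a of order β at x exists and equals 0, computed along the dyadic scales: lim_{n→∞} (R_a(x_n + 2^{−n}) − R_a(x_n))·2^{nβ} = 0, where x_n is the truncation of the binary expansion of x to n digits. -/

import Mathlib

open Real Filter Set Finset

/-- De Rham's function with parameter `a`: the unique continuous function on
`[0,1]` with `R 0 = 0`, `R 1 = 1` satisfying the two functional equations. -/
def IsDeRham (a : ℝ) (R : ℝ → ℝ) : Prop :=
  ContinuousOn R (Set.Icc (0:ℝ) 1) ∧ R 0 = 0 ∧ R 1 = 1 ∧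
  (∀ x : ℝ, 0 ≤ x → x < 1/2 → R x = a * R (2*x)) ∧
  (∀ x : ℝ, 1/2 ≤ x → x ≤ 1 → R x = (1 - a) * R (2*x - 1) + a)

private lemma geom_aux : ∀ n : ℕ, ∑ i ∈ Finset.range n, ((1:ℝ)/2)^(i+1) = 1 - (1/2)^n := by
  intro n
  induction n with
  | zero => simp
  | succ n ih => rw [Finset.sum_range_succ, ih, pow_succ]; ring

private lemma deRham_incr (a : ℝ) (R : ℝ → ℝ) (hR0 : R 0 = 0) (hR1 : R 1 = 1)
    (hEq0 : ∀ x : ℝ, 0 ≤ x → x < 1/2 → R x = a * R (2*x))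
    (hEq1 : ∀ x : ℝ, 1/2 ≤ x → x ≤ 1 → R x = (1 - a) * R (2*x - 1) + a) :
    ∀ (n : ℕ) (e : ℕ → ℕ), (∀ k, e k ≤ 1) →
      R ((∑ i ∈ Finset.range n, (e (i+1) : ℝ) * (1/2)^(i+1)) + (1/2)^n)
        - R (∑ i ∈ Finset.range n, (e (i+1) : ℝ) * (1/2)^(i+1))
      = ∏ i ∈ Finset.range n, (if e (i+1) = 1 then 1 - a else a) := by
  have hhalf : R (1/2) = a := by
    have := hEq1 (1/2) le_rfl (by norm_num)
    norm_num [hR0] at this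
    simpa using this
  have hEq0' : ∀ x : ℝ, 0 ≤ x → x ≤ 1/2 → R x = a * R (2*x) := by
    intro x hx0 hx1
    rcases lt_or_eq_of_le hx1 with h | h
    · exact hEq0 x hx0 h
    · rw [h]; norm_num [hhalf, hR1]
  intro n
  induction n with
  | zero => intro e he; simp [hR0, hR1]
  | succ n ih =>
    intro e he
    set T : ℝ := ∑ i ∈ Finset.range n, (e (i+2) : ℝ) * (1/2)^(i+1) with hTdef
    have hT0 : 0 ≤ T := by
      apply Finset.sum_nonneg; intro i _; positivity
    have hT1 : T ≤ 1 - (1/2)^n := by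
      rw [← geom_aux n]
      apply Finset.sum_le_sum
      intro i _
      have := he (i+2)
      have h1 : (e (i+2) : ℝ) ≤ 1 := by exact_mod_cast this
      nlinarith [pow_pos (by norm_num : (0:ℝ) < 1/2) (i+1)]
    have hS : (∑ i ∈ Finset.range (n+1), (e (i+1) : ℝ) * (1/2)^(i+1))
        = (1/2) * T + (e 1 : ℝ) * (1/2) := by
      rw [Finset.sum_range_succ']
      congr 1
      · rw [Finset.mul_sum]
        apply Finset.sum_congr rfl
        intro i _
        rw [pow_succ]
        ring
      · norm_num
    have hP : (∏ i ∈ Finset.range (n+1), (if e (i+1) = 1 then 1 - a else a))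
        = (∏ i ∈ Finset.range n, (if e (i+2) = 1 then 1 - a else a)) *
          (if e 1 = 1 then 1 - a else a) := by
      rw [Finset.prod_range_succ']
    have hIH := ih (fun k => e (k+1)) (fun k => he (k+1))
    -- hIH : R (T + (1/2)^n) - R T = ∏ ...
    have hpow : ((1:ℝ)/2)^(n+1) = (1/2) * (1/2)^n := by rw [pow_succ]; ring
    rcases Nat.le_one_iff_eq_zero_or_eq_one.mp (he 1) with h1 | h1
    · -- e 1 = 0
      rw [hS, hP, h1]
      push_cast
      rw [hpow]
      have hx1 : R ((1/2) * T + 0 * (1/2) + (1/2) * (1/2)^n)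
          = a * R (T + (1/2)^n) := by
        have := hEq0' ((1/2) * T + 0 * (1/2) + (1/2) * (1/2)^n)
          (by positivity) (by nlinarith)
        rw [this]
        ring_nf
      have hx0 : R ((1/2) * T + 0 * (1/2)) = a * R T := by
        have := hEq0' ((1/2) * T + 0 * (1/2)) (by positivity)
          (by nlinarith [pow_pos (by norm_num : (0:ℝ) < 1/2) n])
        rw [this]
        ring_nf
      rw [hx1, hx0]
      simp only [if_neg (by simp [h1] : ¬ e 1 = 1)] at *
      rw [← mul_sub, hIH]
      ring
    · -- e 1 = 1
      rw [hS, hP, h1]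
      push_cast
      rw [hpow]
      have hx1 : R ((1/2) * T + 1 * (1/2) + (1/2) * (1/2)^n)
          = (1 - a) * R (T + (1/2)^n) + a := by
        have := hEq1 ((1/2) * T + 1 * (1/2) + (1/2) * (1/2)^n)
          (by nlinarith [pow_pos (by norm_num : (0:ℝ) < 1/2) n]) (by nlinarith)
        rw [this]
        ring_nf
      have hx0 : R ((1/2) * T + 1 * (1/2)) = (1 - a) * R T + a := by
        have := hEq1 ((1/2) * T + 1 * (1/2)) (by nlinarith)
          (by nlinarith [pow_pos (by norm_num : (0:ℝ) < 1/2) n])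
        rw [this]
        ring_nf
      rw [hx1, hx0]
      simp only [if_pos (by simp [h1] : e 1 = 1)] at *
      rw [show (1 - a) * R (T + (1/2)^n) + a - ((1 - a) * R T + a)
          = (1 - a) * (R (T + (1/2)^n) - R T) by ring, hIH]
      ring

/-- for `a = 2^{-β}` (`0 < β < 1`, `a ≠ 1/2`) and `x ∈ [0,1)`
not a dyadic rational, with binary digits `d` and truncations
`x_n = Σ_{k=1}^n d_k 2^{-k}`, the forward fractional velocity of De Rham's
function of order `β` at `x` computed along the dyadic scales exists and
equals `0`:  `(R_a(x_n + 2^{-n}) - R_a(x_n)) · 2^{nβ} → 0` as `n → ∞`. -/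
theorem stmt10 (β : ℝ) (hβ0 : 0 < β) (hβ1 : β < 1) (a : ℝ)
    (ha : a = (2:ℝ) ^ (-β)) (ha' : a ≠ 1/2)
    (R : ℝ → ℝ) (hR : IsDeRham a R)
    (x : ℝ) (hx0 : 0 ≤ x) (hx1 : x < 1)
    (hnd : ¬ ∃ (p : ℕ) (m : ℕ), x = (p : ℝ) / 2 ^ m)
    (d : ℕ → ℕ) (hd : ∀ k, d k ≤ 1)
    (hexp : ∀ n : ℕ, ∑ k ∈ Finset.Icc 1 n, (d k : ℝ) * (1/2) ^ k ≤ x ∧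
      x < (∑ k ∈ Finset.Icc 1 n, (d k : ℝ) * (1/2) ^ k) + (1/2) ^ n) :
    Tendsto (fun n : ℕ =>
        (R ((∑ k ∈ Finset.Icc 1 n, (d k : ℝ) * (1/2) ^ k) + (1/2) ^ n) -
          R (∑ k ∈ Finset.Icc 1 n, (d k : ℝ) * (1/2) ^ k)) * (2:ℝ) ^ ((n : ℝ) * β))
      atTop (nhds 0) := by
  obtain ⟨hcont, hR0, hR1, hEq0, hEq1⟩ := hR
  have ha0 : 0 < a := by rw [ha]; positivity
  have ha12 : 1/2 < a := by
    rw [ha]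
    have : (2:ℝ) ^ (-1 : ℝ) < 2 ^ (-β) :=
      Real.rpow_lt_rpow_of_exponent_lt one_lt_two (by linarith)
    calc (1:ℝ)/2 = 2 ^ (-1:ℝ) := by
          rw [Real.rpow_neg_one]; norm_num
      _ < 2 ^ (-β) := this
  have ha1 : a < 1 := by
    rw [ha]
    have : (2:ℝ) ^ (-β) < 2 ^ (0:ℝ) :=
      Real.rpow_lt_rpow_of_exponent_lt one_lt_two (by linarith)
    simpa using this
  -- convert Icc sums to range sums
  have hsum : ∀ n, ∑ k ∈ Finset.Icc 1 n, (d k : ℝ) * (1/2)^k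
      = ∑ i ∈ Finset.range n, (d (i+1) : ℝ) * (1/2)^(i+1) := by
    intro n
    rw [← Finset.Ico_add_one_right_eq_Icc, Finset.sum_Ico_eq_sum_range]
    simp [add_comm 1]
  have hsumN : ∀ n, ∑ k ∈ Finset.Icc 1 n, d k = ∑ i ∈ Finset.range n, d (i+1) := by
    intro n
    rw [← Finset.Ico_add_one_right_eq_Icc, Finset.sum_Ico_eq_sum_range]
    simp [add_comm 1]
  set r : ℝ := (1 - a)/a with hrdef
  have hr0 : 0 ≤ r := by
    apply div_nonneg <;> linarith
  have hr1 : r < 1 := by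
    rw [hrdef, div_lt_one ha0]; linarith
  set s : ℕ → ℕ := fun n => ∑ k ∈ Finset.Icc 1 n, d k with hsdef
  -- key pointwise identity
  have key : ∀ n : ℕ,
      (R ((∑ k ∈ Finset.Icc 1 n, (d k : ℝ) * (1/2) ^ k) + (1/2) ^ n) -
        R (∑ k ∈ Finset.Icc 1 n, (d k : ℝ) * (1/2) ^ k)) * (2:ℝ) ^ ((n : ℝ) * β)
      = r ^ (s n) := by
    intro n
    rw [hsum n, deRham_incr a R hR0 hR1 hEq0 hEq1 n d hd]
    have h2b : (2:ℝ) ^ ((n : ℝ) * β) = (a⁻¹) ^ n := by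
      have hainv : a⁻¹ = (2:ℝ) ^ β := by
        rw [ha, ← Real.rpow_neg (by norm_num), neg_neg]
      rw [hainv, ← Real.rpow_natCast ((2:ℝ)^β) n, ← Real.rpow_mul (by norm_num),
        mul_comm]
    rw [h2b]
    rw [show (a⁻¹ : ℝ) ^ n = ∏ _i ∈ Finset.range n, a⁻¹ by
      rw [Finset.prod_const, Finset.card_range]]
    rw [← Finset.prod_mul_distrib]
    have : ∀ i ∈ Finset.range n,
        (if d (i+1) = 1 then 1 - a else a) * a⁻¹ = r ^ (d (i+1)) := by
      intro i _
      rcases Nat.le_one_iff_eq_zero_or_eq_one.mp (hd (i+1)) with h | h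
      · rw [h]; simp [mul_inv_cancel₀ (ne_of_gt ha0)]
      · rw [h]; simp [hrdef, div_eq_mul_inv]
    rw [Finset.prod_congr rfl this, Finset.prod_pow_eq_pow_sum]
    simp only [hsdef]
    rw [hsumN n]
  -- infinitely many 1 digits
  have hinf : ∀ N : ℕ, ∃ m, N < m ∧ d m = 1 := by
    by_contra h
    push_neg at h
    obtain ⟨N, hN⟩ := h
    have hzero : ∀ m, N < m → d m = 0 := fun m hm =>
      Nat.lt_one_iff.mp (lt_of_le_of_ne (hd m) (hN m hm))
    set T : ℝ := ∑ k ∈ Finset.Icc 1 N, (d k : ℝ) * (1/2)^k with hTdef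
    have hsame : ∀ m, N ≤ m →
        (∑ k ∈ Finset.Icc 1 m, (d k : ℝ) * (1/2)^k) = T := by
      intro m hm
      rw [hTdef]
      symm
      apply Finset.sum_subset
      · exact Finset.Icc_subset_Icc_right hm
      · intro k hk hk'
        simp only [Finset.mem_Icc] at hk hk'
        have : N < k := by omega
        rw [hzero k this]
        simp
    have hxle : x ≤ T := by
      by_contra hlt
      push_neg at hlt
      obtain ⟨m, hm⟩ := exists_pow_lt_of_lt_one (sub_pos.mpr hlt)
        (by norm_num : (1:ℝ)/2 < 1)
      have h2 := (hexp (max N m)).2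
      rw [hsame _ (le_max_left _ _)] at h2
      have : ((1:ℝ)/2)^(max N m) ≤ (1/2)^m :=
        pow_le_pow_of_le_one (by norm_num) (by norm_num) (le_max_right _ _)
      linarith
    have hxge : T ≤ x := by
      have := (hexp N).1
      rwa [← hTdef] at this
    have hxeq : x = T := le_antisymm hxle hxge
    apply hnd
    refine ⟨∑ k ∈ Finset.Icc 1 N, d k * 2 ^ (N - k), N, ?_⟩
    rw [hxeq, hTdef, eq_div_iff (by positivity : (2:ℝ)^N ≠ 0)]
    push_cast
    rw [Finset.sum_mul]
    apply Finset.sum_congr rfl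
    intro k hk
    simp only [Finset.mem_Icc] at hk
    have hkN : k ≤ N := hk.2
    have : (2:ℝ) ^ (N - k) * 2 ^ k = 2 ^ N := by
      rw [← pow_add, Nat.sub_add_cancel hkN]
    field_simp
    rw [← this, one_div, inv_pow]
    field_simp
  -- s tends to infinity
  have hmono : Monotone s := by
    intro n m hnm
    exact Finset.sum_le_sum_of_subset (Finset.Icc_subset_Icc_right hnm)
  have hub : ∀ b : ℕ, ∃ n, b ≤ s n := by
    intro b
    induction b with
    | zero => exact ⟨0, Nat.zero_le _⟩
    | succ b ih =>
      obtain ⟨n, hn⟩ := ih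
      obtain ⟨m, hm, hdm⟩ := hinf n
      refine ⟨m, ?_⟩
      have hnotin : m ∉ Finset.Icc 1 n := by simp; omega
      have hsub : insert m (Finset.Icc 1 n) ⊆ Finset.Icc 1 m := by
        intro k hk
        simp only [Finset.mem_insert, Finset.mem_Icc] at hk ⊢
        rcases hk with h | h
        · omega
        · omega
      have hle := Finset.sum_le_sum_of_subset (f := d) hsub
      rw [Finset.sum_insert hnotin] at hle
      have hsn : s n = ∑ k ∈ Finset.Icc 1 n, d k := rfl
      have hsm : s m = ∑ k ∈ Finset.Icc 1 m, d k := rfl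
      omega
  have hstend : Tendsto s atTop atTop := tendsto_atTop_atTop_of_monotone hmono hub
  have hlim : Tendsto (fun n : ℕ => r ^ (s n)) atTop (nhds 0) :=
    (tendsto_pow_atTop_nhds_zero_of_lt_one hr0 hr1).comp hstend
  exact hlim.congr (fun n => (key n).symm)
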